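/- arXiv:1701.03119 — 3 statements merged into one kernel-verified Lean document; each statement's English description precedes it below -/
import Mathlib

section
/- The function H_m^n(α) is monotonically non-decreasing in m: for every 1 ≤ m < 2^n, H_m^n(α) ≤ H_{m+1}^n(α). -/
/-!
Removing a uniformly random point from `S` (with `|S| ≥ 2`) and averaging the resulting output
distributions recovers the output distribution of `S`. Entropy is concave, so the entropy for `S` is
at least the average entropy over the sets `S \ {x}`, hence at least one of them; each `S \ {x}`
has one point less, which gives `H_m^n(α) ≤ H_{m+1}^n(α)`.
-/

/-- Shannon entropy (in bits) of a distribution `p` on a finite type. -/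
noncomputable def ent {Ω : Type*} [Fintype Ω] (p : Ω → ℝ) : ℝ :=
  ∑ x, -(p x * Real.logb 2 (p x))

/-- The distribution of `U_S ⊕ Z^n`, where `U_S` is uniform on `S` and `Z^n` is
i.i.d. Bernoulli(α), independent of `U_S`. -/
noncomputable def bscOut {n : ℕ} (S : Finset (Fin n → Bool)) (α : ℝ)
    (y : Fin n → Bool) : ℝ :=
  (S.card : ℝ)⁻¹ * ∑ x ∈ S, ∏ i, (if y i = x i then 1 - α else α)

/-- `H_m^n(α)`: minimal entropy of `U_S ⊕ Z^n` over sets `S` of cardinality `m`. -/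
noncomputable def Hmn (n m : ℕ) (α : ℝ) : ℝ :=
  sInf {h : ℝ | ∃ S : Finset (Fin n → Bool), S.card = m ∧ h = ent (bscOut S α)}

open Finset Real

lemma Finset.sum_sum_erase {ι M : Type*} [DecidableEq ι] [AddCommMonoid M] (S : Finset ι)
    (f : ι → M) : ∑ x ∈ S, ∑ y ∈ S.erase x, f y = (#S - 1) • ∑ y ∈ S, f y := by
  rw [Finset.sum_comm' (t' := S) (s' := fun y => S.erase y) (fun x y => by
    simp only [mem_erase]; tauto), smul_sum]
  exact sum_congr rfl fun y hy => by rw [sum_const, card_erase_of_mem hy]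

lemma concaveOn_neg_mul_logb_two : ConcaveOn ℝ (Set.Ici 0) fun x : ℝ => -(x * logb 2 x) :=
  (concaveOn_negMulLog.smul (inv_nonneg.2 (log_nonneg one_le_two))).congr fun x _ => by
    simp only [negMulLog, logb, smul_eq_mul]
    ring

lemma concaveOn_ent {Ω : Type*} [Fintype Ω] : ConcaveOn ℝ (Set.Ici 0) (ent (Ω := Ω)) := by
  refine ⟨convex_Ici 0, fun p hp q hq a b ha hb hab => ?_⟩
  simp only [ent, smul_eq_mul, mul_sum, ← sum_add_distrib]
  exact sum_le_sum fun x _ => concaveOn_neg_mul_logb_two.2 (hp x) (hq x) ha hb hab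

lemma bscOut_nonneg {n : ℕ} (S : Finset (Fin n → Bool)) {α : ℝ} (hα₀ : 0 ≤ α) (hα₁ : α ≤ 1) :
    0 ≤ bscOut S α := fun y =>
  mul_nonneg (by positivity) <| sum_nonneg fun x _ => prod_nonneg fun i _ => by
    split_ifs <;> linarith

lemma bscOut_eq_sum_erase {n : ℕ} (S : Finset (Fin n → Bool)) (α : ℝ) (hS : 1 < #S) :
    bscOut S α = ∑ x ∈ S, (#S : ℝ)⁻¹ • bscOut (S.erase x) α := by
  ext y
  have hS₁ : (#S : ℝ) - 1 ≠ 0 := sub_ne_zero.2 (by exact_mod_cast hS.ne')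
  have hcard : ∀ x ∈ S, (#(S.erase x) : ℝ) = #S - 1 := fun x hx => by
    rw [card_erase_of_mem hx, Nat.cast_pred (by omega)]
  simp only [bscOut, Finset.sum_apply, Pi.smul_apply, smul_eq_mul, ← mul_sum]
  congr 1
  rw [eq_comm]
  rw [sum_congr rfl fun x hx => by rw [hcard x hx], ← mul_sum, sum_sum_erase, nsmul_eq_mul,
    Nat.cast_pred (by omega), inv_mul_cancel_left₀ hS₁]

lemma exists_ent_bscOut_erase_le {n : ℕ} (S : Finset (Fin n → Bool)) {α : ℝ} (hα₀ : 0 ≤ α)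
    (hα₁ : α ≤ 1) (hS : 1 < #S) : ∃ x ∈ S, ent (bscOut (S.erase x) α) ≤ ent (bscOut S α) := by
  have hjensen : ∑ x ∈ S, (#S : ℝ)⁻¹ • ent (bscOut (S.erase x) α)
      ≤ ∑ _x ∈ S, (#S : ℝ)⁻¹ • ent (bscOut S α) := by
    have hw : ∑ _x ∈ S, (#S : ℝ)⁻¹ = 1 := by
      rw [sum_const, nsmul_eq_mul, mul_inv_cancel₀ (by positivity)]
    rw [← sum_smul, hw, one_smul, bscOut_eq_sum_erase S α hS]
    exact concaveOn_ent.le_map_sum (fun _ _ => by positivity) hw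
      fun x _ => bscOut_nonneg _ hα₀ hα₁
  obtain ⟨x, hx, hle⟩ := exists_le_of_sum_le (card_pos.1 (by omega)) hjensen
  exact ⟨x, hx, le_of_mul_le_mul_left hle (by positivity)⟩

lemma Hmn_le_ent {n m : ℕ} {α : ℝ} {S : Finset (Fin n → Bool)} (hS : #S = m) :
    Hmn n m α ≤ ent (bscOut S α) :=
  csInf_le ((Set.finite_range fun S : Finset (Fin n → Bool) => ent (bscOut S α)).subset
    (by rintro _ ⟨S, -, rfl⟩; exact ⟨S, rfl⟩)).bddBelow ⟨S, hS, rfl⟩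

theorem Hmn_mono (n m : ℕ) (α : ℝ) (hα : α ∈ Set.Icc (0:ℝ) (1/2))
    (hm : 1 ≤ m) (hm' : m < 2 ^ n) :
    Hmn n m α ≤ Hmn n (m + 1) α := by
  obtain ⟨S₀, -, hS₀⟩ := exists_subset_card_eq (s := (univ : Finset (Fin n → Bool)))
    (n := m + 1) (by simpa using hm')
  refine le_csInf ⟨_, S₀, hS₀, rfl⟩ ?_
  rintro _ ⟨S, hS, rfl⟩
  obtain ⟨x, hx, hle⟩ := exists_ent_bscOut_erase_le S hα.1 (by linarith [hα.2]) (by omega)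
  exact (Hmn_le_ent (by rw [card_erase_of_mem hx, hS]; rfl)).trans hle
end

section
/- Let S ⊆ {0,1}^n and let S̄ be the result of one shifting step on the first coordinate. Let P_{Y|X} be a discrete memoryless channel with binary input, and let Y^n (resp. Ȳ^n) be its output when the input is U_S (resp. U_{S̄}), uniform on S (resp. S̄). Then for every ω in the output alphabet power 𝒴^{n−1}: (i) Pr(Y_2^n = ω) = Pr(Ȳ_2^n = ω), and (ii) |Pr(U_{S̄,1} = 1 | Ȳ_2^n = ω) − 1/2| ≥ |Pr(U_{S,1} = 1 | Y_2^n = ω) − 1/2|. -/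
/-!
Every weight that ignores the first input coordinate — in particular the likelihood of `Y_2^n = ω`
given the input — has the same total over `S` and over `S̄`, since shifting only moves points
along that coordinate; this gives (i). For (ii), write `A`, `B`, `C` for the total weight of `S`,
of its points with `x_1 = 1`, and of `S_1`. The biases are `B / A` and `(B - C) / A`. The points
with `x_1 = 1` that stay in `S̄` flip down injectively into points of `S` with `x_1 = 0`, so
`B - C ≤ A - B`: the shifted set lies on the `x_1 = 0` side of `1/2`, and further from it.
-/

/-- `S_i`: members of `S` with `i`-th coordinate `1` whose flip-down is not in `S`. -/
def shiftSet {n : ℕ} (S : Finset (Fin n → Bool)) (i : Fin n) :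
    Finset (Fin n → Bool) :=
  S.filter (fun x => x i = true ∧ Function.update x i false ∉ S)

/-- `Pr(Y_2^n = ω)` when the input to the memoryless channel `P` is uniform on `S`. -/
noncomputable def prY2 {n : ℕ} {Y : Type*} [Fintype Y] (P : Bool → Y → ℝ)
    (S : Finset (Fin (n+1) → Bool)) (ω : Fin n → Y) : ℝ :=
  (S.card : ℝ)⁻¹ * ∑ x ∈ S, ∏ j : Fin n, P (x j.succ) (ω j)

/-- `Pr(U_{S,1} = 1, Y_2^n = ω)` when the input is uniform on `S`. -/
noncomputable def prJoint {n : ℕ} {Y : Type*} [Fintype Y] (P : Bool → Y → ℝ)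
    (S : Finset (Fin (n+1) → Bool)) (ω : Fin n → Y) : ℝ :=
  (S.card : ℝ)⁻¹ * ∑ x ∈ S.filter (fun x => x 0 = true), ∏ j : Fin n, P (x j.succ) (ω j)

/-- The shifted set `S̄ = (S \ S_i) ∪ (S_i - e_i)`. -/
def shiftDown {n : ℕ} (S : Finset (Fin n → Bool)) (i : Fin n) : Finset (Fin n → Bool) :=
  (S \ shiftSet S i) ∪ (shiftSet S i).image (fun x => Function.update x i false)

section Shift

variable {n : ℕ} {S : Finset (Fin n → Bool)} {i : Fin n}

theorem mem_shiftSet {x : Fin n → Bool} :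
    x ∈ shiftSet S i ↔ x ∈ S ∧ x i = true ∧ Function.update x i false ∉ S := by
  simp [shiftSet]

theorem shiftSet_subset : shiftSet S i ⊆ S := Finset.filter_subset _ _

theorem shiftSet_subset_filter : shiftSet S i ⊆ S.filter (fun x => x i = true) :=
  fun _ hx => Finset.mem_filter.2 ⟨(mem_shiftSet.1 hx).1, (mem_shiftSet.1 hx).2.1⟩

theorem injOn_update_false : Set.InjOn (fun x : Fin n → Bool => Function.update x i false)
    {x | x i = true} := by
  intro x (hx : x i = true) y (hy : y i = true) h
  have h' := congrArg (fun z => Function.update z i true) h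
  simp only [Function.update_idem] at h'
  rwa [Function.update_eq_self_iff.2 hx.symm, Function.update_eq_self_iff.2 hy.symm] at h'

theorem injOn_update_false_shiftSet :
    Set.InjOn (fun x : Fin n → Bool => Function.update x i false) (shiftSet S i) :=
  injOn_update_false.mono fun _ hx => (mem_shiftSet.1 hx).2.1

theorem disjoint_sdiff_shiftSet_image :
    Disjoint (S \ shiftSet S i) ((shiftSet S i).image fun x => Function.update x i false) := by
  rw [Finset.disjoint_right]
  rintro _ hy hyS
  obtain ⟨x, hx, rfl⟩ := Finset.mem_image.1 hy
  exact (mem_shiftSet.1 hx).2.2 (Finset.mem_sdiff.1 hyS).1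

theorem filter_shiftDown :
    (shiftDown S i).filter (fun x => x i = true) =
      S.filter (fun x => x i = true) \ shiftSet S i := by
  ext x
  simp only [shiftDown, Finset.mem_filter, Finset.mem_union, Finset.mem_sdiff, Finset.mem_image]
  constructor
  · rintro ⟨⟨hx, hxS⟩ | ⟨y, -, rfl⟩, hxi⟩
    · exact ⟨⟨hx, hxi⟩, hxS⟩
    · simp at hxi
  · rintro ⟨⟨hx, hxi⟩, hxS⟩
    exact ⟨Or.inl ⟨hx, hxS⟩, hxi⟩

/-- The points with `x i = 1` that survive the shift flip down injectively into `S`. -/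
theorem sum_filter_sub_sum_shiftSet_le {w : (Fin n → Bool) → ℝ} (hw0 : ∀ x, 0 ≤ w x)
    (hw : ∀ x, w (Function.update x i false) = w x) :
    ∑ x ∈ S.filter (fun x => x i = true), w x - ∑ x ∈ shiftSet S i, w x ≤
      ∑ x ∈ S.filter (fun x => x i = false), w x := by
  set D := S.filter (fun x => x i = true) \ shiftSet S i
  have hD : ∀ x ∈ D, x i = true ∧ Function.update x i false ∈ S := by
    intro x hx
    obtain ⟨hxS, hxi⟩ := Finset.mem_filter.1 (Finset.mem_sdiff.1 hx).1
    exact ⟨hxi, by_contra fun h => (Finset.mem_sdiff.1 hx).2 (mem_shiftSet.2 ⟨hxS, hxi, h⟩)⟩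
  have himage : D.image (fun x => Function.update x i false) ⊆
      S.filter (fun x => x i = false) := by
    intro y hy
    obtain ⟨x, hx, rfl⟩ := Finset.mem_image.1 hy
    exact Finset.mem_filter.2 ⟨(hD x hx).2, by simp⟩
  calc ∑ x ∈ S.filter (fun x => x i = true), w x - ∑ x ∈ shiftSet S i, w x
      = ∑ x ∈ D, w x := by rw [← Finset.sum_sdiff_eq_sub shiftSet_subset_filter]
    _ = ∑ y ∈ D.image (fun x => Function.update x i false), w y := by
      rw [Finset.sum_image (injOn_update_false.mono fun x hx => (hD x hx).1)]
      exact Finset.sum_congr rfl fun x _ => (hw x).symm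
    _ ≤ _ := Finset.sum_le_sum_of_subset_of_nonneg himage fun x _ _ => hw0 x

theorem sum_shiftDown {M : Type*} [AddCommMonoid M] {w : (Fin n → Bool) → M}
    (hw : ∀ x, w (Function.update x i false) = w x) :
    ∑ x ∈ shiftDown S i, w x = ∑ x ∈ S, w x := by
  rw [shiftDown, Finset.sum_union disjoint_sdiff_shiftSet_image,
    Finset.sum_image injOn_update_false_shiftSet, Finset.sum_congr rfl fun x _ => hw x,
    Finset.sum_sdiff shiftSet_subset]

theorem card_shiftDown : (shiftDown S i).card = S.card := by
  rw [Finset.card_eq_sum_ones, Finset.card_eq_sum_ones]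
  exact sum_shiftDown fun _ => rfl

end Shift

theorem abs_div_sub_half_le_abs_sub_div_sub_half {A B C : ℝ} (hC : 0 ≤ C)
    (h : B - C ≤ A - B) : |B / A - 1 / 2| ≤ |(B - C) / A - 1 / 2| := by
  rcases eq_or_ne A 0 with rfl | hA
  · simp
  have key : |B - A / 2| ≤ |B - C - A / 2| := by
    rw [abs_of_nonpos (by linarith : B - C - A / 2 ≤ 0), abs_le]
    constructor <;> linarith
  have hsub : ∀ t, t / A - 1 / 2 = (t - A / 2) / A := fun t => by field_simp
  rw [hsub, hsub, abs_div, abs_div]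
  exact div_le_div_of_nonneg_right key (abs_nonneg A)

/-- `P_{Y_2^n | X^n}(ω | x)`. -/
def channelWeight {n : ℕ} {Y : Type*} (P : Bool → Y → ℝ) (ω : Fin n → Y)
    (x : Fin (n + 1) → Bool) : ℝ :=
  ∏ j : Fin n, P (x j.succ) (ω j)

section Channel

variable {n : ℕ} {Y : Type*} {P : Bool → Y → ℝ} {ω : Fin n → Y}

theorem channelWeight_nonneg (hP0 : ∀ b y, 0 ≤ P b y) (x : Fin (n + 1) → Bool) :
    0 ≤ channelWeight P ω x :=
  Finset.prod_nonneg fun _ _ => hP0 _ _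

theorem channelWeight_update_zero (x : Fin (n + 1) → Bool) (b : Bool) :
    channelWeight P ω (Function.update x 0 b) = channelWeight P ω x :=
  Finset.prod_congr rfl fun j _ => by rw [Function.update_of_ne j.succ_ne_zero]

theorem prY2_eq [Fintype Y] (S : Finset (Fin (n + 1) → Bool)) :
    prY2 P S ω = (S.card : ℝ)⁻¹ * ∑ x ∈ S, channelWeight P ω x := rfl

theorem prJoint_div_prY2 [Fintype Y] (S : Finset (Fin (n + 1) → Bool)) :
    prJoint P S ω / prY2 P S ω =
      (∑ x ∈ S.filter (fun x => x 0 = true), channelWeight P ω x) /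
        ∑ x ∈ S, channelWeight P ω x := by
  rcases S.eq_empty_or_nonempty with rfl | hS
  · simp [prJoint, prY2]
  exact mul_div_mul_left _ _ (inv_ne_zero (Nat.cast_ne_zero.2 hS.card_ne_zero))

end Channel

theorem shift_preserves_marginal_and_biases_general (n : ℕ) (Y : Type*) [Fintype Y]
    (P : Bool → Y → ℝ) (hP0 : ∀ b y, 0 ≤ P b y)
    (S : Finset (Fin (n+1) → Bool))
    (SBar : Finset (Fin (n+1) → Bool))
    (hSBar : SBar = (S \ shiftSet S 0) ∪
      (shiftSet S 0).image (fun x => Function.update x 0 false))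
    (ω : Fin n → Y) :
    prY2 P S ω = prY2 P SBar ω ∧
    |prJoint P S ω / prY2 P S ω - 1/2| ≤
      |prJoint P SBar ω / prY2 P SBar ω - 1/2| := by
  change SBar = shiftDown S 0 at hSBar
  subst hSBar
  have hw : ∀ x, channelWeight P ω (Function.update x 0 false) = channelWeight P ω x :=
    fun x => channelWeight_update_zero x false
  refine ⟨by rw [prY2_eq, prY2_eq, card_shiftDown, sum_shiftDown hw], ?_⟩
  rw [prJoint_div_prY2, prJoint_div_prY2, sum_shiftDown hw, filter_shiftDown,
    Finset.sum_sdiff_eq_sub shiftSet_subset_filter]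
  refine abs_div_sub_half_le_abs_sub_div_sub_half
    (Finset.sum_nonneg fun x _ => channelWeight_nonneg hP0 x) ?_
  have hsplit := Finset.sum_filter_add_sum_filter_not S (fun x => x 0 = true)
    (channelWeight P ω)
  simp only [Bool.not_eq_true] at hsplit
  linarith [sum_filter_sub_sum_shiftSet_le (S := S) (channelWeight_nonneg hP0) hw]

theorem shift_preserves_marginal_and_biases (n : ℕ) (Y : Type*) [Fintype Y]
    (P : Bool → Y → ℝ) (hP0 : ∀ b y, 0 ≤ P b y) (hP1 : ∀ b, ∑ y, P b y = 1)
    (S : Finset (Fin (n+1) → Bool)) (hS : S.Nonempty)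
    (SBar : Finset (Fin (n+1) → Bool))
    (hSBar : SBar = (S \ shiftSet S 0) ∪
      (shiftSet S 0).image (fun x => Function.update x 0 false))
    (ω : Fin n → Y) :
    prY2 P S ω = prY2 P SBar ω ∧
    |prJoint P S ω / prY2 P S ω - 1/2| ≤
      |prJoint P SBar ω / prY2 P SBar ω - 1/2| :=
  shift_preserves_marginal_and_biases_general n Y P hP0 S SBar hSBar ω
end

section
/- Sufficiency of monotone sets: H_m^n(α) = min over monotone sets S ⊆ {0,1}^n with |S| = m of H(U_S ⊕ Z^n). -/
/-- A set `S ⊆ {0,1}^n` is monotone (downward closed for the coordinatewise order). -/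
def MonoSet {n : ℕ} (S : Finset (Fin n → Bool)) : Prop :=
  ∀ x ∈ S, ∀ y : Fin n → Bool, (∀ i, y i ≤ x i) → y ∈ S

/-! Down-shifting `S` in coordinate `i` replaces each `x ∈ S` with `x i = 1` whose flip at `i` lies
outside `S` by that flip. This keeps `|S|`, and for every pair `{y, y ⊕ eᵢ}` it keeps the sum of the
two output probabilities while moving them further apart, so by concavity of `-t log t` the output
entropy does not increase. Each effective shift lowers the total Hamming weight of `S`, and a set
that no shift changes is monotone. -/

open Finset Real

theorem ConcaveOn.add_le_add_of_mem_Icc {f : ℝ → ℝ} {s : Set ℝ} (hf : ConcaveOn ℝ s f)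
    {a b a' b' : ℝ} (ha' : a' ∈ s) (hb' : b' ∈ s) (h₁ : a' ≤ a) (h₂ : a ≤ b')
    (hsum : a + b = a' + b') : f a' + f b' ≤ f a + f b := by
  rcases h₁.eq_or_lt with rfl | hlt
  · obtain rfl : b = b' := by linarith
    rfl
  have hd : b' - a' ≠ 0 := by linarith
  set θ := (a - a') / (b' - a')
  have hθ₀ : 0 ≤ θ := div_nonneg (by linarith) (by linarith)
  have hθ₁ : θ ≤ 1 := div_le_one_of_le₀ (by linarith) (by linarith)
  have ha : (1 - θ) • a' + θ • b' = a := by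
    simp only [θ, smul_eq_mul]; field_simp; ring
  have hb : θ • a' + (1 - θ) • b' = b := by
    simp only [θ, smul_eq_mul]; field_simp; rw [show b = a' + b' - a by linarith]; ring
  have k₁ := hf.2 ha' hb' (sub_nonneg.2 hθ₁) hθ₀ (by ring)
  have k₂ := hf.2 ha' hb' hθ₀ (sub_nonneg.2 hθ₁) (by ring)
  rw [ha] at k₁
  rw [hb] at k₂
  simp only [smul_eq_mul] at k₁ k₂
  linarith

theorem ConcaveOn.add_le_add_of_mul_nonpos {f : ℝ → ℝ} {s : Set ℝ} (hf : ConcaveOn ℝ s f)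
    {a b a' b' : ℝ} (ha' : a' ∈ s) (hb' : b' ∈ s) (h : (a - a') * (a - b') ≤ 0)
    (hsum : a + b = a' + b') : f a' + f b' ≤ f a + f b := by
  rcases mul_nonpos_iff.1 h with ⟨h₁, h₂⟩ | ⟨h₁, h₂⟩
  · exact hf.add_le_add_of_mem_Icc ha' hb' (by linarith) (by linarith) hsum
  · rw [add_comm (f a')]
    exact hf.add_le_add_of_mem_Icc hb' ha' (by linarith) (by linarith) (by linarith)

theorem Real.concaveOn_neg_mul_logb {b : ℝ} (hb : 1 ≤ b) :
    ConcaveOn ℝ (Set.Ici 0) fun t => -(t * logb b t) := by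
  refine (Real.concaveOn_negMulLog.smul (inv_nonneg.2 (Real.log_nonneg hb))).congr fun t _ => ?_
  simp only [negMulLog, logb, smul_eq_mul]
  ring

namespace BoolCube

variable {n : ℕ}

def flipAt (i : Fin n) (x : Fin n → Bool) : Fin n → Bool := Function.update x i (!x i)

@[simp]
lemma flipAt_apply_self (i : Fin n) (x : Fin n → Bool) : flipAt i x i = !x i := by
  simp [flipAt]

@[simp]
lemma flipAt_apply_of_ne {i j : Fin n} (h : j ≠ i) (x : Fin n → Bool) : flipAt i x j = x j :=
  Function.update_of_ne h _ _

lemma flipAt_involutive (i : Fin n) : Function.Involutive (flipAt i) := by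
  intro x
  funext j
  by_cases h : j = i
  · subst h; simp
  · simp [h]

@[simp]
lemma flipAt_flipAt (i : Fin n) (x : Fin n → Bool) : flipAt i (flipAt i x) = x :=
  flipAt_involutive i x

lemma flipAt_eq_flipAt_iff (i j : Fin n) (x y : Fin n → Bool) :
    flipAt i y j = flipAt i x j ↔ y j = x j := by
  by_cases h : j = i
  · subst h; simp
  · simp [h]

def hammingWeight (x : Fin n → Bool) : ℕ := #{j | x j = true}

lemma hammingWeight_flipAt_lt {i : Fin n} {x : Fin n → Bool} (hx : x i = true) :
    hammingWeight (flipAt i x) < hammingWeight x := by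
  have : ({j | flipAt i x j = true} : Finset (Fin n)) = ({j | x j = true} : Finset _).erase i := by
    ext j
    by_cases h : j = i
    · subst h; simp [hx]
    · simp [h]
  rw [hammingWeight, hammingWeight, this]
  exact card_erase_lt_of_mem (by simp [hx])

/-- The probability that the binary symmetric channel with crossover probability `α` turns
`x` into `y`. -/
noncomputable def bscKernel (α : ℝ) (x y : Fin n → Bool) : ℝ :=
  ∏ j, if y j = x j then 1 - α else α

variable {α : ℝ}

lemma bscKernel_nonneg (h₀ : 0 ≤ α) (h₁ : α ≤ 1) (x y : Fin n → Bool) : 0 ≤ bscKernel α x y :=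
  prod_nonneg fun j _ => by split_ifs <;> linarith

@[simp]
lemma bscKernel_flipAt_flipAt (i : Fin n) (x y : Fin n → Bool) :
    bscKernel α (flipAt i x) (flipAt i y) = bscKernel α x y := by
  simp only [bscKernel, flipAt_eq_flipAt_iff]

lemma bscKernel_flipAt_left (i : Fin n) (x y : Fin n → Bool) :
    bscKernel α (flipAt i x) y = bscKernel α x (flipAt i y) := by
  simpa using bscKernel_flipAt_flipAt (α := α) i x (flipAt i y)

lemma bscKernel_flipAt_le (h₀ : 0 ≤ α) (h : α ≤ 1 / 2) {i : Fin n} {x y : Fin n → Bool}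
    (hxy : x i = y i) : bscKernel α x (flipAt i y) ≤ bscKernel α x y := by
  unfold bscKernel
  rw [← mul_prod_erase univ _ (mem_univ i), ← mul_prod_erase univ _ (mem_univ i),
    prod_congr rfl fun j hj => by rw [flipAt_apply_of_ne (ne_of_mem_erase hj)]]
  refine mul_le_mul_of_nonneg_right ?_ (prod_nonneg fun j _ => by split_ifs <;> linarith)
  rw [flipAt_apply_self, hxy, if_neg (Bool.not_ne_self _), if_pos rfl]
  linarith

/-- The contributions of `x` and `flipAt i x` to the difference cancel, which leaves the points
of `U` that disagree with `y` at `i` and whose flip is not in `U`; each contributes `≥ 0`. -/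
lemma sum_bscKernel_le_sum_bscKernel_flipAt (h₀ : 0 ≤ α) (h : α ≤ 1 / 2) {i : Fin n}
    {y : Fin n → Bool} {U : Finset (Fin n → Bool)}
    (hU : ∀ x ∈ U, x i = y i → flipAt i x ∈ U) :
    ∑ x ∈ U, bscKernel α x y ≤ ∑ x ∈ U, bscKernel α x (flipAt i y) := by
  set d := fun x => bscKernel α x (flipAt i y) - bscKernel α x y
  have hd : ∀ x, d (flipAt i x) = -d x := fun x => by
    simp only [d, bscKernel_flipAt_left, flipAt_flipAt]; ring
  set U₁ := U.filter fun x => x i = y i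
  set U₀ := U.filter fun x => ¬x i = y i
  have hV : U₁.image (flipAt i) ⊆ U₀ := by
    simp only [subset_iff, mem_image, mem_filter, U₁, U₀]
    rintro _ ⟨x, ⟨hxU, hxy⟩, rfl⟩
    exact ⟨hU x hxU hxy, by simp [hxy]⟩
  have hV_sum : ∑ x ∈ U₁.image (flipAt i), d x = -∑ x ∈ U₁, d x := by
    rw [sum_image fun x _ x' _ h => (flipAt_involutive i).injective h]
    simp [hd]
  have hrest : 0 ≤ ∑ x ∈ U₀ \ U₁.image (flipAt i), d x := by
    refine sum_nonneg fun x hx => ?_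
    have hxy : ¬x i = y i := (mem_filter.1 (mem_sdiff.1 hx).1).2
    have : flipAt i x i = y i := by
      rw [flipAt_apply_self, Bool.not_eq_eq_eq_not, Bool.eq_not_iff]; exact hxy
    have := bscKernel_flipAt_le h₀ h this
    simp only [d]
    linarith [hd x]
  have : 0 ≤ ∑ x ∈ U, d x := by
    rw [← sum_filter_add_sum_filter_not U fun x => x i = y i, ← sum_sdiff hV, hV_sum]
    linarith
  simpa [d] using this

def shiftable (i : Fin n) (S : Finset (Fin n → Bool)) : Finset (Fin n → Bool) :=
  {x ∈ S | x i = true ∧ flipAt i x ∉ S}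

def shift (i : Fin n) (S : Finset (Fin n → Bool)) : Finset (Fin n → Bool) :=
  (S \ shiftable i S) ∪ (shiftable i S).image (flipAt i)

lemma shiftable_subset (i : Fin n) (S : Finset (Fin n → Bool)) : shiftable i S ⊆ S :=
  filter_subset _ _

lemma mem_shiftable {i : Fin n} {S : Finset (Fin n → Bool)} {x : Fin n → Bool} :
    x ∈ shiftable i S ↔ x ∈ S ∧ x i = true ∧ flipAt i x ∉ S :=
  mem_filter

lemma flipAt_mem_sdiff_shiftable {i : Fin n} {S : Finset (Fin n → Bool)} {x : Fin n → Bool}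
    (hx : x ∈ S \ shiftable i S) (hxi : x i = true) : flipAt i x ∈ S \ shiftable i S := by
  rw [mem_sdiff, mem_shiftable] at hx ⊢
  refine ⟨?_, fun h => by simpa [hxi] using h.2.1⟩
  by_contra h
  exact hx.2 ⟨hx.1, hxi, h⟩

lemma sum_shift {M : Type*} [AddCommMonoid M] (i : Fin n) (S : Finset (Fin n → Bool))
    (g : (Fin n → Bool) → M) :
    ∑ x ∈ shift i S, g x = ∑ x ∈ S \ shiftable i S, g x + ∑ x ∈ shiftable i S, g (flipAt i x) := by
  have hdisj : Disjoint (S \ shiftable i S) ((shiftable i S).image (flipAt i)) := by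
    simp only [disjoint_right, mem_image, mem_sdiff, mem_shiftable]
    rintro _ ⟨x, hx, rfl⟩ h
    exact hx.2.2 h.1
  rw [shift, sum_union hdisj, sum_image fun x _ x' _ h => (flipAt_involutive i).injective h]

lemma card_shift (i : Fin n) (S : Finset (Fin n → Bool)) : #(shift i S) = #S := by
  rw [card_eq_sum_ones, card_eq_sum_ones S, sum_shift, sum_sdiff (shiftable_subset i S)]

lemma sum_hammingWeight_shift_lt {i : Fin n} {S : Finset (Fin n → Bool)}
    (h : (shiftable i S).Nonempty) :
    ∑ x ∈ shift i S, hammingWeight x < ∑ x ∈ S, hammingWeight x := by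
  rw [sum_shift, ← sum_sdiff (shiftable_subset i S)]
  exact Nat.add_lt_add_left (sum_lt_sum_of_nonempty h fun x hx =>
    hammingWeight_flipAt_lt (mem_shiftable.1 hx).2.1) _

lemma monoSet_of_forall_shiftable_eq_empty {S : Finset (Fin n → Bool)}
    (h : ∀ i, shiftable i S = ∅) : MonoSet S := by
  have hflip : ∀ x ∈ S, ∀ i, x i = true → flipAt i x ∈ S := fun x hx i hxi => by
    by_contra hx'
    simpa [h i] using mem_shiftable.2 ⟨hx, hxi, hx'⟩
  intro x
  induction x using WellFoundedLT.induction with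
  | _ x ih =>
  intro hx y hyx
  obtain rfl | ⟨i, hi⟩ := eq_or_ne y x |>.imp id Function.ne_iff.1
  · exact hx
  obtain ⟨hyi, hxi⟩ := Bool.lt_iff.1 ((hyx i).lt_of_ne hi)
  refine ih _ (by simp [flipAt, hxi]) (hflip x hx i hxi) y fun j => ?_
  by_cases hj : j = i
  · subst hj; simp [hyi]
  · simpa [hj] using hyx j

lemma bscOut_eq (i : Fin n) (S : Finset (Fin n → Bool)) (y : Fin n → Bool) :
    bscOut S α y = (#S : ℝ)⁻¹ *
      (∑ x ∈ S \ shiftable i S, bscKernel α x y + ∑ x ∈ shiftable i S, bscKernel α x y) := by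
  rw [sum_sdiff (shiftable_subset i S)]
  rfl

lemma bscOut_shift (i : Fin n) (S : Finset (Fin n → Bool)) (y : Fin n → Bool) :
    bscOut (shift i S) α y = (#S : ℝ)⁻¹ * (∑ x ∈ S \ shiftable i S, bscKernel α x y +
      ∑ x ∈ shiftable i S, bscKernel α x (flipAt i y)) := by
  rw [bscOut, card_shift]
  simp only [← bscKernel_flipAt_left]
  exact congrArg _ (sum_shift i S (bscKernel α · y))

lemma bscOut_nonneg (h₀ : 0 ≤ α) (h₁ : α ≤ 1) (S : Finset (Fin n → Bool)) (y : Fin n → Bool) :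
    0 ≤ bscOut S α y :=
  mul_nonneg (by positivity) (sum_nonneg fun x _ => bscKernel_nonneg h₀ h₁ x y)

variable {f : ℝ → ℝ}

/-- Write `bscOut S = c * (p + q)` with `p` the mass from the points that stay and `q` the mass
from those that move; the shift replaces `q` by `q ∘ flipAt i`. Flipping `y` raises `p` and lowers
`q`, so the shift spreads the values at `y` and `flipAt i y` further apart at the same sum. -/
lemma comp_bscOut_shift_add_le (hf : ConcaveOn ℝ (Set.Ici 0) f) (h₀ : 0 ≤ α) (h : α ≤ 1 / 2)
    (i : Fin n) (S : Finset (Fin n → Bool)) {y : Fin n → Bool} (hy : y i = true) :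
    f (bscOut (shift i S) α y) + f (bscOut (shift i S) α (flipAt i y)) ≤
      f (bscOut S α y) + f (bscOut S α (flipAt i y)) := by
  have h₁ : α ≤ 1 := by linarith
  have ha := bscOut_nonneg h₀ h₁ (shift i S) y
  have hb := bscOut_nonneg h₀ h₁ (shift i S) (flipAt i y)
  simp only [bscOut_shift i, flipAt_flipAt] at ha hb ⊢
  simp only [bscOut_eq i]
  have hp : ∑ x ∈ S \ shiftable i S, bscKernel α x y ≤
      ∑ x ∈ S \ shiftable i S, bscKernel α x (flipAt i y) :=
    sum_bscKernel_le_sum_bscKernel_flipAt h₀ h fun x hx hxy =>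
      flipAt_mem_sdiff_shiftable hx (hxy.trans hy)
  have hq : ∑ x ∈ shiftable i S, bscKernel α x (flipAt i y) ≤
      ∑ x ∈ shiftable i S, bscKernel α x y :=
    sum_le_sum fun x hx => bscKernel_flipAt_le h₀ h ((mem_shiftable.1 hx).2.1.trans hy.symm)
  set c : ℝ := (#S : ℝ)⁻¹
  set p := ∑ x ∈ S \ shiftable i S, bscKernel α x y
  set p' := ∑ x ∈ S \ shiftable i S, bscKernel α x (flipAt i y)
  set q := ∑ x ∈ shiftable i S, bscKernel α x y
  set q' := ∑ x ∈ shiftable i S, bscKernel α x (flipAt i y)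
  refine hf.add_le_add_of_mul_nonpos ha hb ?_ (by ring)
  calc (c * (p + q) - c * (p + q')) * (c * (p + q) - c * (p' + q))
      _ = c ^ 2 * ((q - q') * (p - p')) := by ring
      _ ≤ 0 := mul_nonpos_of_nonneg_of_nonpos (sq_nonneg c)
        (mul_nonpos_of_nonneg_of_nonpos (sub_nonneg.2 hq) (sub_nonpos.2 hp))

lemma sum_comp_bscOut_shift_le (hf : ConcaveOn ℝ (Set.Ici 0) f) (h₀ : 0 ≤ α) (h : α ≤ 1 / 2)
    (i : Fin n) (S : Finset (Fin n → Bool)) :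
    ∑ y, f (bscOut (shift i S) α y) ≤ ∑ y, f (bscOut S α y) := by
  have hpair : ∀ y, f (bscOut (shift i S) α y) + f (bscOut (shift i S) α (flipAt i y)) ≤
      f (bscOut S α y) + f (bscOut S α (flipAt i y)) := fun y => by
    cases hy : y i
    · have := comp_bscOut_shift_add_le hf h₀ h i S (y := flipAt i y) (by simp [hy])
      rwa [flipAt_flipAt, add_comm, add_comm (f (bscOut S α _))] at this
    · exact comp_bscOut_shift_add_le hf h₀ h i S hy
  have hflip (g : (Fin n → Bool) → ℝ) : ∑ y, g (flipAt i y) = ∑ y, g y :=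
    Fintype.sum_bijective _ (flipAt_involutive i).bijective _ _ fun _ => rfl
  have := sum_le_sum fun y (_ : y ∈ univ) => hpair y
  rw [sum_add_distrib, sum_add_distrib, hflip fun y => f (bscOut (shift i S) α y),
    hflip fun y => f (bscOut S α y)] at this
  linarith

theorem exists_monoSet_card_eq_sum_comp_bscOut_le (hf : ConcaveOn ℝ (Set.Ici 0) f)
    (h₀ : 0 ≤ α) (h : α ≤ 1 / 2) (S : Finset (Fin n → Bool)) :
    ∃ S' : Finset (Fin n → Bool), MonoSet S' ∧ #S' = #S ∧
      ∑ y, f (bscOut S' α y) ≤ ∑ y, f (bscOut S α y) := by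
  by_cases hS : ∀ i, shiftable i S = ∅
  · exact ⟨S, monoSet_of_forall_shiftable_eq_empty hS, rfl, le_rfl⟩
  obtain ⟨i, hi⟩ := not_forall.1 hS
  obtain ⟨S', hS', hcard, hle⟩ := exists_monoSet_card_eq_sum_comp_bscOut_le hf h₀ h (shift i S)
  exact ⟨S', hS', hcard.trans (card_shift i S), hle.trans (sum_comp_bscOut_shift_le hf h₀ h i S)⟩
termination_by ∑ x ∈ S, hammingWeight x
decreasing_by exact sum_hammingWeight_shift_lt (nonempty_iff_ne_empty.2 hi)

end BoolCube

theorem monotone_sets_suffice_general (n m : ℕ)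
    (α : ℝ) (hα : α ∈ Set.Icc (0:ℝ) (1/2)) :
    Hmn n m α = sInf {h : ℝ | ∃ S : Finset (Fin n → Bool),
      S.card = m ∧ MonoSet S ∧ h = ent (bscOut S α)} := by
  refine csInf_eq_csInf_of_forall_exists_le ?_ ?_
  · rintro _ ⟨S, rfl, rfl⟩
    obtain ⟨S', hS', hcard, hle⟩ :=
      BoolCube.exists_monoSet_card_eq_sum_comp_bscOut_le (concaveOn_neg_mul_logb one_le_two)
        hα.1 hα.2 S
    exact ⟨_, ⟨S', hcard, hS', rfl⟩, hle⟩
  · rintro _ ⟨S, hS, -, rfl⟩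
    exact ⟨_, ⟨S, hS, rfl⟩, le_rfl⟩

/-- Sufficiency of monotone sets: the minimum in `H_m^n(α)` is attained over
monotone sets. -/
theorem monotone_sets_suffice (n m : ℕ) (hm : 1 ≤ m) (hm' : m ≤ 2 ^ n)
    (α : ℝ) (hα : α ∈ Set.Icc (0:ℝ) (1/2)) :
    Hmn n m α = sInf {h : ℝ | ∃ S : Finset (Fin n → Bool),
      S.card = m ∧ MonoSet S ∧ h = ent (bscOut S α)} :=
  monotone_sets_suffice_general n m α hα
end
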